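/- Let A be a finite abelian group and α a stationary N-step Markov measure on A^ℤ whose transition probabilities q^a_b (a ∈ A^N, b ∈ A) are all strictly positive. Then α is harmonically mixing. -/

import Mathlib

open MeasureTheory

/-- Evaluation at `x` of the character of `A^ℤ` with coefficient system `χ`. -/
noncomputable def charEval {A : Type*} [AddCommGroup A] (χ : ℤ → AddChar A ℂ)
    (x : ℤ → A) : ℂ :=
  ∏ᶠ i, χ i (x i)

/-- Harmonic mixing of a measure on `A^ℤ`. -/
def HarmonicallyMixing {A : Type*} [AddCommGroup A] [MeasurableSpace A]
    (μ : Measure (ℤ → A)) : Prop :=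
  ∀ ε > 0, ∃ R : ℕ, ∀ χ : ℤ → AddChar A ℂ, {i | χ i ≠ 1}.Finite →
    R < {i | χ i ≠ 1}.ncard → ‖∫ x, charEval χ x ∂μ‖ < ε

/-!
The σ-algebra on `A` is arbitrary, but the cylinder formula forces it to separate points: if
`c ≠ c'` could not be separated, the measurable hull of `{x | x 0 = c}` would contain
`{x | x 0 = c'}`, and the cylinder masses of all values except `c'` would already cover the whole
space. So the integral of a character supported in a window of `N + n` coordinates is the finite
sum `∑ u, P u * ∏ j, χ_j (u j)` against the Markov weights `P`.

Pick at least `#supp χ / (N + 1)` coordinates of the support with pairwise gaps larger than `N`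
(a residue class modulo `N + 1`). Once all other coordinates are fixed, `P` factors over the
chosen coordinates `s`: `u s` only enters the `N + 1` transition probabilities that read it, and
their product lies in `[δ ^ (N + 1), 1]` where `δ = min q`. Since a nontrivial character sums to
zero, `‖∑ b, ψ b * w b‖ ≤ (1 - δ ^ (N + 1)) * ∑ b, w b` for such weights `w`, so the integral is
at most `(1 - δ ^ (N + 1)) ^ (#supp χ / (N + 1))`.
-/

open Finset Function
open scoped ENNReal

section DependsOn
variable {ι : Type*} {α : ι → Type*} {M : Type*} [CommMonoid M] {s : Set ι}

theorem DependsOn.mul {f g : (Π i, α i) → M} (hf : DependsOn f s) (hg : DependsOn g s) :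
    DependsOn (fun x => f x * g x) s :=
  fun _ _ h => congrArg₂ (· * ·) (hf h) (hg h)

theorem DependsOn.finset_prod {κ : Type*} {t : Finset κ} {f : κ → (Π i, α i) → M}
    (hf : ∀ k ∈ t, DependsOn (f k) s) : DependsOn (fun x => ∏ k ∈ t, f k x) s :=
  fun _ _ h => prod_congr rfl fun k hk => hf k hk h

end DependsOn

section CharacterSums
variable {A : Type*} [AddCommGroup A] [Fintype A]

theorem AddChar.norm_sum_mul_le {ψ : AddChar A ℂ} (hψ : ψ ≠ 1) {w : A → ℝ} {m : ℝ}
    (hm : 0 ≤ m) (hwm : ∀ b, m ≤ w b) (hw1 : ∀ b, w b ≤ 1) :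
    ‖∑ b, ψ b * (w b : ℂ)‖ ≤ (1 - m) * ∑ b, w b := by
  have hψ0 : ∑ b, ψ b = 0 :=
    AddChar.sum_eq_zero_iff_ne_zero.2 (by simpa [← AddChar.one_eq_zero] using hψ)
  have hshift : ∑ b, ψ b * (w b : ℂ) = ∑ b, ψ b * ((w b - m : ℝ) : ℂ) := by
    simp only [Complex.ofReal_sub, mul_sub, sum_sub_distrib, ← sum_mul, hψ0, zero_mul, sub_zero]
  have hcard : ∑ b, w b ≤ Fintype.card A := by
    simpa using sum_le_sum fun b (_ : b ∈ univ) => hw1 b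
  calc ‖∑ b, ψ b * (w b : ℂ)‖ ≤ ∑ b, ‖ψ b * ((w b - m : ℝ) : ℂ)‖ := hshift ▸ norm_sum_le _ _
    _ = ∑ b, (w b - m) := by
        refine sum_congr rfl fun b _ => ?_
        rw [norm_mul, AddChar.norm_apply, one_mul, Complex.norm_real,
          Real.norm_of_nonneg (sub_nonneg.2 (hwm b))]
    _ = ∑ b, w b - Fintype.card A * m := by simp [sum_sub_distrib]
    _ ≤ (1 - m) * ∑ b, w b := by nlinarith

theorem norm_sum_prod_addChar_mul_le {κ : Type*} [Fintype κ] [DecidableEq κ]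
    {ψ : κ → AddChar A ℂ} (hψ : ∀ k, ψ k ≠ 1) {w : κ → A → ℝ} {m : ℝ} (hm : 0 ≤ m)
    (hwm : ∀ k b, m ≤ w k b) (hw1 : ∀ k b, w k b ≤ 1) :
    ‖∑ h : κ → A, ∏ k, ψ k (h k) * (w k (h k) : ℂ)‖ ≤
      (1 - m) ^ Fintype.card κ * ∑ h : κ → A, ∏ k, w k (h k) := by
  rw [← Fintype.prod_sum fun k b => ψ k b * (w k b : ℂ), ← Fintype.prod_sum, norm_prod,
    ← card_univ, ← prod_const, ← prod_mul_distrib]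
  exact prod_le_prod (fun _ _ => norm_nonneg _)
    fun k _ => AddChar.norm_sum_mul_le (hψ k) hm (hwm k) (hw1 k)

theorem norm_sum_sum_prod_addChar_mul_le {κ γ : Type*} [Fintype κ] [DecidableEq κ] [Fintype γ]
    {ψ : κ → AddChar A ℂ} (hψ : ∀ k, ψ k ≠ 1) {c : γ → ℂ} (hc : ∀ g, ‖c g‖ = 1)
    {r : γ → ℝ} (hr : ∀ g, 0 ≤ r g) {w : γ → κ → A → ℝ} {m : ℝ} (hm : 0 ≤ m)
    (hwm : ∀ g k b, m ≤ w g k b) (hw1 : ∀ g k b, w g k b ≤ 1) :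
    ‖∑ g, ∑ h : κ → A, (∏ k, ψ k (h k)) * c g * ((r g * ∏ k, w g k (h k) : ℝ) : ℂ)‖ ≤
      (1 - m) ^ Fintype.card κ * ∑ g, ∑ h : κ → A, r g * ∏ k, w g k (h k) := by
  rw [mul_sum]
  refine (norm_sum_le _ _).trans (sum_le_sum fun g _ => ?_)
  calc _ = ‖c g * r g * ∑ h : κ → A, ∏ k, ψ k (h k) * (w g k (h k) : ℂ)‖ := by
        rw [mul_sum]
        congr 1
        refine sum_congr rfl fun h _ => ?_
        push_cast
        rw [prod_mul_distrib]
        ring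
    _ = r g * ‖∑ h : κ → A, ∏ k, ψ k (h k) * (w g k (h k) : ℂ)‖ := by
        rw [norm_mul, norm_mul, hc, one_mul, Complex.norm_real, Real.norm_of_nonneg (hr g)]
    _ ≤ r g * ((1 - m) ^ Fintype.card κ * ∑ h : κ → A, ∏ k, w g k (h k)) :=
        mul_le_mul_of_nonneg_left (norm_sum_prod_addChar_mul_le hψ hm (hwm g) (hw1 g)) (hr g)
    _ = _ := by rw [← mul_sum]; ring

theorem norm_sum_prod_addChar_mul_le_of_dependsOn {ι : Type*} [Fintype ι] [DecidableEq ι]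
    (S : Finset ι) {ψ : ι → AddChar A ℂ} (hψ : ∀ s ∈ S, ψ s ≠ 1)
    {R : (ι → A) → ℝ} (hR0 : ∀ u, 0 ≤ R u) (hR : DependsOn R (↑S)ᶜ)
    {Q : ι → (ι → A) → ℝ} (hQ : ∀ s ∈ S, DependsOn (Q s) (insert s (↑S)ᶜ))
    {m : ℝ} (hm : 0 ≤ m) (hQm : ∀ s ∈ S, ∀ u, m ≤ Q s u) (hQ1 : ∀ s ∈ S, ∀ u, Q s u ≤ 1) :
    ‖∑ u, (∏ i, ψ i (u i)) * ((R u * ∏ s ∈ S, Q s u : ℝ) : ℂ)‖ ≤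
      (1 - m) ^ #S * ∑ u, R u * ∏ s ∈ S, Q s u := by
  set e := (Equiv.piEquivPiSubtypeProd (· ∈ S) fun _ => A).symm
  have he : ∀ h g i, e (h, g) i = if hi : i ∈ S then h ⟨i, hi⟩ else g ⟨i, hi⟩ :=
    fun _ _ _ => rfl
  set w : ({i // i ∉ S} → A) → S → A → ℝ := fun g s b => Q s (e (fun _ => b, g))
  have hfactor : ∀ h g, R (e (h, g)) * ∏ s ∈ S, Q s (e (h, g)) =
      R (e (0, g)) * ∏ s : S, w g s (h s) := by
    intro h g
    rw [← prod_coe_sort S]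
    congr 1
    · exact hR fun i hi => by simp [he, show i ∉ S from hi]
    · refine Fintype.prod_congr _ _ fun s => hQ s s.2 fun i hi => ?_
      rcases hi with rfl | hi
      · simp [he]
      · simp [he, show i ∉ S from hi]
  have hchar : ∀ h g, ∏ i, ψ i (e (h, g) i) =
      (∏ s : S, ψ s (h s)) * ∏ i ∈ Sᶜ, ψ i (e (0, g) i) := by
    intro h g
    rw [← prod_mul_prod_compl S, ← prod_coe_sort S]
    congr 1
    · exact Fintype.prod_congr _ _ fun s => by simp [he]
    · exact prod_congr rfl fun i hi => by simp [he, mem_compl.1 hi]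
  rw [← e.sum_comp, ← e.sum_comp, Fintype.sum_prod_type_right, Fintype.sum_prod_type_right,
    ← Fintype.card_coe S]
  simp only [hfactor, hchar]
  exact norm_sum_sum_prod_addChar_mul_le (ψ := fun s : S => ψ s) (fun s => hψ s s.2)
    (fun _ => by simp [norm_prod]) (fun _ => hR0 _) hm (fun _ s _ => hQm s s.2 _)
    fun _ s _ => hQ1 s s.2 _

end CharacterSums

theorem exists_sparse_subset_of_mul_lt_card {L : ℕ} (T : Finset (Fin L)) (N M : ℕ)
    (h : (N + 1) * M < #T) :
    ∃ T' ⊆ T, M < #T' ∧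
      ∀ j ∈ T', ∀ j' ∈ T', j ≠ j' → (j : ℕ) + N < j' ∨ (j' : ℕ) + N < j := by
  obtain ⟨r, -, hr⟩ := exists_lt_card_fiber_of_mul_lt_card_of_maps_to
    (f := fun j : Fin L => (j : ℕ) % (N + 1)) (t := range (N + 1))
    (fun j _ => mem_range.2 (Nat.mod_lt _ N.succ_pos)) (by rwa [card_range])
  refine ⟨_, filter_subset _ _, hr, fun j hj j' hj' hne => ?_⟩
  have hmod : (j : ℕ) ≡ j' [MOD N + 1] := (mem_filter.1 hj).2.trans (mem_filter.1 hj').2.symm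
  rcases lt_or_gt_of_ne (Fin.val_ne_of_ne hne) with hlt | hlt
  · have := Nat.le_of_dvd (by omega) ((Nat.modEq_iff_dvd' hlt.le).1 hmod)
    omega
  · have := Nat.le_of_dvd (by omega) ((Nat.modEq_iff_dvd' hlt.le).1 hmod.symm)
    omega

section MarkovWeight
variable {A : Type*} {N : ℕ} (q : (Fin N → A) → A → ℝ) (ν : (Fin N → A) → ℝ)

def zeroExtend [Zero A] {L : ℕ} (u : Fin L → A) (i : ℕ) : A :=
  if h : i < L then u ⟨i, h⟩ else 0

theorem DependsOn.comp_zeroExtend [Zero A] {β : Type*} {L : ℕ} {F : (ℕ → A) → β} {J : Set ℕ}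
    (hF : DependsOn F J) :
    DependsOn (fun u : Fin L → A => F (zeroExtend u)) {j | (j : ℕ) ∈ J} :=
  fun u v h => hF fun i hi => by
    unfold zeroExtend
    split_ifs with hiL
    exacts [h ⟨i, hiL⟩ hi, rfl]

def transitionWeight (i : ℕ) (f : ℕ → A) : ℝ :=
  q (fun j : Fin N => f (i + j)) (f (i + N))

/-- The mass of the cylinder `{x | ∀ i < N + n, x (k + i) = f i}` under the Markov measure. -/
def markovWeight (n : ℕ) (f : ℕ → A) : ℝ :=
  ν (fun j : Fin N => f j) * ∏ i ∈ range n, transitionWeight q i f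

theorem dependsOn_transitionWeight (i : ℕ) :
    DependsOn (transitionWeight q i) (Set.Icc i (i + N)) :=
  fun f g h => by
    unfold transitionWeight
    rw [h (i + N) ⟨by omega, le_rfl⟩]
    congr 1
    exact funext fun j => h _ ⟨by omega, by omega⟩

theorem dependsOn_initialWeight :
    DependsOn (fun f : ℕ → A => ν (fun j : Fin N => f j)) (Set.Iio N) :=
  fun _ _ h => congrArg ν (funext fun j => h j j.2)

variable {q ν}

theorem markovWeight_nonneg (hq : ∀ a b, 0 ≤ q a b) (hν : ∀ a, 0 ≤ ν a) (n : ℕ) (f : ℕ → A) :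
    0 ≤ markovWeight q ν n f :=
  mul_nonneg (hν _) (prod_nonneg fun _ _ => hq _ _)

/-- `Icc (j - N) j` are the transitions reading the coordinate `j`; for sparse `T` these blocks
are disjoint, and the remaining transitions read no coordinate of `T`. -/
theorem markovWeight_eq_mul_prod_block {L n : ℕ} (T : Finset (Fin L))
    (hT : ∀ j ∈ T, (j : ℕ) < n)
    (hsep : ∀ j ∈ T, ∀ j' ∈ T, j ≠ j' → (j : ℕ) + N < j' ∨ (j' : ℕ) + N < j) (f : ℕ → A) :
    markovWeight q ν n f =
      (ν (fun j : Fin N => f j) * ∏ i ∈ range n with ∀ j ∈ T, ¬ (i ≤ (j : ℕ) ∧ (j : ℕ) ≤ i + N),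
        transitionWeight q i f) * ∏ j ∈ T, ∏ i ∈ Icc ((j : ℕ) - N) j, transitionWeight q i f := by
  have hdisj : (T : Set (Fin L)).PairwiseDisjoint fun j => Icc ((j : ℕ) - N) j := by
    intro j hj j' hj' hne
    refine disjoint_left.2 fun i hi hi' => ?_
    simp only [mem_Icc] at hi hi'
    have := hsep j hj j' hj' hne
    omega
  have hread : {i ∈ range n | ¬ ∀ j ∈ T, ¬ (i ≤ (j : ℕ) ∧ (j : ℕ) ≤ i + N)} =
      T.biUnion fun j => Icc ((j : ℕ) - N) j := by
    ext i
    simp only [mem_filter, mem_range, mem_biUnion, mem_Icc, not_forall, not_not]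
    constructor
    · rintro ⟨-, j, hj, hij⟩
      exact ⟨j, hj, by omega, hij.1⟩
    · rintro ⟨j, hj, hij⟩
      exact ⟨by have := hT j hj; omega, j, hj, hij.2, by omega⟩
  rw [markovWeight, ← prod_filter_mul_prod_filter_not (range n)
    fun i => ∀ j ∈ T, ¬ (i ≤ (j : ℕ) ∧ (j : ℕ) ≤ i + N), hread, prod_biUnion hdisj, mul_assoc]

theorem norm_sum_prod_addChar_mul_markovWeight_le [AddCommGroup A] [Fintype A] {n : ℕ}
    (hν : ∀ a, 0 ≤ ν a) {δ : ℝ} (hδ : 0 ≤ δ) (hδq : ∀ a b, δ ≤ q a b) (hq1 : ∀ a b, q a b ≤ 1)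
    (T : Finset (Fin (N + n))) (hT : ∀ j ∈ T, N ≤ (j : ℕ) ∧ (j : ℕ) < n)
    (hsep : ∀ j ∈ T, ∀ j' ∈ T, j ≠ j' → (j : ℕ) + N < j' ∨ (j' : ℕ) + N < j)
    {ψ : Fin (N + n) → AddChar A ℂ} (hψ : ∀ j ∈ T, ψ j ≠ 1) :
    ‖∑ u : Fin (N + n) → A, (∏ j, ψ j (u j)) * (markovWeight q ν n (zeroExtend u) : ℂ)‖ ≤
      (1 - δ ^ (N + 1)) ^ #T * ∑ u : Fin (N + n) → A, markovWeight q ν n (zeroExtend u) := by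
  have hq : ∀ a b, 0 ≤ q a b := fun a b => hδ.trans (hδq a b)
  simp only [markovWeight_eq_mul_prod_block T (fun j hj => (hT j hj).2) hsep]
  refine norm_sum_prod_addChar_mul_le_of_dependsOn T hψ
    (fun u => mul_nonneg (hν _) (prod_nonneg fun i _ => hq _ _)) ?_ (fun j hj => ?_)
    (pow_nonneg hδ _) (fun j hj u => ?_)
    fun j _ u => prod_le_one (fun _ _ => hq _ _) fun _ _ => hq1 _ _
  · refine ((dependsOn_initialWeight ν).comp_zeroExtend.mono fun j hj hjT => ?_).mul
      (DependsOn.finset_prod fun i hi =>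
        (dependsOn_transitionWeight q i).comp_zeroExtend.mono fun j hj hjT => ?_)
    · exact absurd (hT j hjT).1 (by simpa using hj)
    · exact (mem_filter.1 hi).2 j hjT (by simpa using hj)
  · refine DependsOn.finset_prod fun i hi =>
      (dependsOn_transitionWeight q i).comp_zeroExtend.mono fun j' hj' => ?_
    simp only [mem_Icc] at hi
    simp only [Set.mem_Icc, Set.mem_ofPred_eq] at hj'
    by_cases hjj : j' = j
    · exact .inl hjj
    · refine .inr fun hj'T => ?_
      have := hsep j' hj'T j hj hjj
      omega
  · calc δ ^ (N + 1) = ∏ _i ∈ Icc ((j : ℕ) - N) j, δ := by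
          rw [prod_const, Nat.card_Icc]
          have := (hT j hj).1
          congr 1
          omega
      _ ≤ _ := prod_le_prod (fun _ _ => hδ) fun i _ => hδq _ _

end MarkovWeight

section Measure
variable {A : Type*}

theorem MeasurableSet.preimage_comp_left_eq {ι : Type*} [MeasurableSpace A] {S : Set (ι → A)}
    (hS : MeasurableSet S) {σ : A → A} (hσ : ∀ T, MeasurableSet T → σ ⁻¹' T = T) :
    (σ ∘ ·) ⁻¹' S = S := by
  have : MeasurableSpace.pi ≤ MeasurableSpace.invariants (σ ∘ · : (ι → A) → ι → A) :=
    iSup_le fun i => MeasurableSpace.comap_le_iff_le_map.2 fun T hT =>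
      ⟨measurable_pi_apply i hT, Set.ext fun x => Set.ext_iff.1 (hσ T hT) (x i)⟩
  exact (this S hS).2

theorem separatesPoints_of_measure_eval_le {ι : Type*} [Fintype A] [MeasurableSpace A]
    (μ : Measure (ι → A)) [IsProbabilityMeasure μ] (i : ι) {p : A → ℝ≥0∞}
    (hp : ∀ b, μ {x | x i = b} ≤ p b) (hsum : ∑ b, p b = 1) (hpos : ∀ b, p b ≠ 0) :
    MeasurableSpace.SeparatesPoints A := by
  classical
  refine MeasurableSpace.separatesPoints_iff.2 fun c c' hcc' => ?_
  by_contra hne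
  have hσ : ∀ T, MeasurableSet T → Equiv.swap c c' ⁻¹' T = T := by
    intro T hT
    ext a
    simp only [Set.mem_preimage, Equiv.swap_apply_def]
    split_ifs with h₁ h₂
    · exact h₁ ▸ (hcc' T hT).symm
    · exact h₂ ▸ hcc' T hT
    · exact Iff.rfl
  set D : A → Set (ι → A) := fun b => toMeasurable μ {x | x i = b}
  have hcover : Set.univ ⊆ ⋃ b ∈ univ.erase c', D b := by
    intro x _
    simp only [Set.mem_iUnion, mem_erase, mem_univ, and_true]
    by_cases hx : x i = c'
    · refine ⟨c, hne, ?_⟩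
      show x ∈ toMeasurable μ {x | x i = c}
      rw [← (measurableSet_toMeasurable _ _).preimage_comp_left_eq hσ]
      exact subset_toMeasurable _ _ (by simp [hx])
    · exact ⟨x i, hx, subset_toMeasurable _ _ rfl⟩
  have hle : 1 ≤ ∑ b ∈ univ.erase c', p b :=
    calc 1 = μ Set.univ := measure_univ.symm
      _ ≤ ∑ b ∈ univ.erase c', μ (D b) :=
          (measure_mono hcover).trans (measure_biUnion_finset_le _ _)
      _ ≤ ∑ b ∈ univ.erase c', p b :=
          sum_le_sum fun b _ => (measure_toMeasurable _).trans_le (hp b)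
  rw [← sum_erase_add _ _ (mem_univ c')] at hsum
  have hfin : ∑ b ∈ univ.erase c', p b ≠ ∞ :=
    ne_top_of_le_ne_top ENNReal.one_ne_top (hsum ▸ le_self_add)
  refine hpos c' (le_zero_iff.1 ((ENNReal.add_le_add_iff_left hfin).1 ?_))
  rw [hsum, add_zero]
  exact hle

theorem integral_comp_window_eq_sum [Zero A] [Fintype A] [MeasurableSpace A]
    [MeasurableSingletonClass A] {E : Type*} [NormedAddCommGroup E] [NormedSpace ℝ E]
    [CompleteSpace E] {L : ℕ} (μ : Measure (ℤ → A)) [IsFiniteMeasure μ] (k : ℤ)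
    {W : (ℕ → A) → ℝ} (hW : ∀ f, 0 ≤ W f)
    (hμ : ∀ f : ℕ → A, μ {x | ∀ i : ℕ, i < L → x (k + i) = f i} = ENNReal.ofReal (W f))
    (G : (Fin L → A) → E) :
    ∫ x, G (fun j => x (k + j)) ∂μ = ∑ u, W (zeroExtend u) • G u := by
  set w : (ℤ → A) → Fin L → A := fun x j => x (k + j)
  have hw : Measurable w := measurable_pi_lambda _ fun j => measurable_pi_apply _
  have hcyl : ∀ u, μ.map w {u} = ENNReal.ofReal (W (zeroExtend u)) := by
    intro u
    rw [Measure.map_apply hw (measurableSet_singleton u), ← hμ]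
    congr 1
    ext x
    simp only [w, zeroExtend, Set.mem_preimage, Set.mem_singleton_iff, funext_iff,
      Fin.forall_iff, Set.mem_ofPred_eq]
    exact forall_congr' fun i => forall_congr' fun hi => by rw [dif_pos hi]
  rw [← integral_map hw.aemeasurable StronglyMeasurable.of_discrete.aestronglyMeasurable,
    integral_fintype .of_finite]
  refine sum_congr rfl fun u _ => ?_
  rw [measureReal_def, hcyl, ENNReal.toReal_ofReal (hW _)]

variable {N : ℕ} {q : (Fin N → A) → A → ℝ} {ν : (Fin N → A) → ℝ}

theorem measure_eval_zero_le_sum [Fintype A] [MeasurableSpace A]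
    (α : Measure (ℤ → A))
    (hα : ∀ f : ℕ → A, α {x | ∀ i : ℕ, i < N + 1 → x (-N + i) = f i} =
      ENNReal.ofReal (markovWeight q ν 1 f)) (b : A) :
    α {x | x 0 = b} ≤ ∑ a, ENNReal.ofReal (ν a * q a b) := by
  set f : (Fin N → A) → ℕ → A := fun a i => if h : i < N then a ⟨i, h⟩ else b
  have hcover : {x : ℤ → A | x 0 = b} ⊆
      ⋃ a, {x | ∀ i : ℕ, i < N + 1 → x (-N + i) = f a i} := by
    intro x hx
    refine Set.mem_iUnion.2 ⟨fun j => x (-N + j), fun i hi => ?_⟩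
    by_cases hiN : i < N
    · simp [f, hiN]
    · simp only [f, dif_neg hiN]
      rw [← hx]
      congr 1
      omega
  calc α {x | x 0 = b} ≤ ∑' a, α {x | ∀ i : ℕ, i < N + 1 → x (-N + i) = f a i} :=
        (measure_mono hcover).trans (measure_iUnion_le _)
    _ = ∑ a, ENNReal.ofReal (ν a * q a b) := by
        rw [tsum_fintype]
        refine sum_congr rfl fun a _ => ?_
        rw [hα]
        simp [markovWeight, transitionWeight, f]

theorem separatesPoints_of_markov [Fintype A] [MeasurableSpace A]
    (hqpos : ∀ a b, 0 < q a b) (hqrow : ∀ a, ∑ b, q a b = 1)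
    (hν0 : ∀ a, 0 ≤ ν a) (hν1 : ∑ a, ν a = 1) (α : Measure (ℤ → A)) [IsProbabilityMeasure α]
    (hα : ∀ f : ℕ → A, α {x | ∀ i : ℕ, i < N + 1 → x (-N + i) = f i} =
      ENNReal.ofReal (markovWeight q ν 1 f)) :
    MeasurableSpace.SeparatesPoints A := by
  refine separatesPoints_of_measure_eval_le α 0 (measure_eval_zero_le_sum α hα) ?_ fun b => ?_
  · rw [sum_comm]
    simp_rw [← ENNReal.ofReal_sum_of_nonneg fun b _ => mul_nonneg (hν0 _) (hqpos _ b).le,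
      ← mul_sum, hqrow, mul_one]
    rw [← ENNReal.ofReal_sum_of_nonneg fun a _ => hν0 a, hν1, ENNReal.ofReal_one]
  · obtain ⟨a, ha⟩ : ∃ a, 0 < ν a := by
      by_contra! h
      simp [le_antisymm (h _) (hν0 _)] at hν1
    exact ((ENNReal.ofReal_pos.2 (mul_pos ha (hqpos a b))).trans_le
      (single_le_sum (f := fun a => ENNReal.ofReal (ν a * q a b)) (fun _ _ => zero_le)
        (mem_univ a))).ne'

end Measure

section Window
variable {A : Type*} [AddCommGroup A]

theorem exists_window_of_finite {s : Set ℤ} (hs : s.Finite) (N : ℕ) :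
    ∃ (k : ℤ) (n : ℕ), ∀ i ∈ s, k + N ≤ i ∧ i < k + n := by
  refine ⟨-(hs.toFinset.sup Int.natAbs + N), 2 * hs.toFinset.sup Int.natAbs + N + 1,
    fun i hi => ?_⟩
  have : i.natAbs ≤ hs.toFinset.sup Int.natAbs := le_sup (hs.mem_toFinset.2 hi)
  omega

theorem charEval_eq_prod {χ : ℤ → AddChar A ℂ} {k : ℤ} {L : ℕ}
    (hχ : ∀ i, χ i ≠ 1 → ∃ j : Fin L, k + j = i) (x : ℤ → A) :
    charEval χ x = ∏ j : Fin L, χ (k + j) (x (k + j)) := by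
  have hsupp : mulSupport (fun i => χ i (x i)) ⊆ univ.image fun j : Fin L => k + j := by
    intro i hi
    obtain ⟨j, rfl⟩ := hχ i fun h => hi (by simp [h])
    simp
  rw [charEval, finprod_eq_prod_of_mulSupport_subset _ hsupp,
    prod_image fun j _ j' _ h => Fin.ext (by simpa using h)]

theorem ncard_ne_one_eq_card {χ : ℤ → AddChar A ℂ} {k : ℤ} {L : ℕ}
    (hχ : ∀ i, χ i ≠ 1 → ∃ j : Fin L, k + j = i) :
    {i | χ i ≠ 1}.ncard = #{j : Fin L | χ (k + j) ≠ 1} := by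
  have : {i | χ i ≠ 1} = (fun j : Fin L => k + j) '' ↑({j : Fin L | χ (k + j) ≠ 1} : Finset _) := by
    ext i
    constructor
    · intro hi
      obtain ⟨j, rfl⟩ := hχ i hi
      exact ⟨j, by simpa using hi, rfl⟩
    · rintro ⟨j, hj, rfl⟩
      simpa using hj
  rw [this, Set.ncard_image_of_injective _ fun j j' h => Fin.ext (by simpa using h),
    Set.ncard_coe_finset]

theorem norm_integral_charEval_le [Fintype A] [MeasurableSpace A] [MeasurableSingletonClass A]
    {N n : ℕ} {q : (Fin N → A) → A → ℝ} {ν : (Fin N → A) → ℝ} {k : ℤ}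
    (α : Measure (ℤ → A)) [IsProbabilityMeasure α]
    (hα : ∀ f : ℕ → A, α {x | ∀ i : ℕ, i < N + n → x (k + i) = f i} =
      ENNReal.ofReal (markovWeight q ν n f))
    (hν : ∀ a, 0 ≤ ν a) {δ : ℝ} (hδ : 0 ≤ δ) (hδq : ∀ a b, δ ≤ q a b) (hq1 : ∀ a b, q a b ≤ 1)
    {χ : ℤ → AddChar A ℂ} (hχ : ∀ i, χ i ≠ 1 → k + N ≤ i ∧ i < k + n) {M : ℕ}
    (hM : (N + 1) * M < {i | χ i ≠ 1}.ncard) :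
    ‖∫ x, charEval χ x ∂α‖ ≤ (1 - δ ^ (N + 1)) ^ M := by
  have hW : ∀ f, 0 ≤ markovWeight q ν n f :=
    markovWeight_nonneg (fun a b => hδ.trans (hδq a b)) hν n
  have hcover : ∀ i, χ i ≠ 1 → ∃ j : Fin (N + n), k + j = i := fun i hi => by
    have := hχ i hi
    exact ⟨⟨(i - k).toNat, by omega⟩, by simp; omega⟩
  have htotal : ∑ u : Fin (N + n) → A, markovWeight q ν n (zeroExtend u) = 1 := by
    simpa using (integral_comp_window_eq_sum α k hW hα fun _ => (1 : ℝ)).symm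
  rw [ncard_ne_one_eq_card hcover] at hM
  obtain ⟨T, hT, hMT, hsep⟩ := exists_sparse_subset_of_mul_lt_card _ N M hM
  have hTwin : ∀ j ∈ T, N ≤ (j : ℕ) ∧ (j : ℕ) < n := fun j hj => by
    have := hχ _ (mem_filter.1 (hT hj)).2
    omega
  have hθ : 0 ≤ 1 - δ ^ (N + 1) :=
    sub_nonneg.2 (pow_le_one₀ hδ ((hδq (fun _ => 0) 0).trans (hq1 _ _)))
  simp_rw [charEval_eq_prod hcover]
  rw [integral_comp_window_eq_sum α k hW hα
    fun u : Fin (N + n) → A => ∏ j : Fin (N + n), χ (k + j) (u j)]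
  calc _ = ‖∑ u : Fin (N + n) → A, (∏ j : Fin (N + n), χ (k + j) (u j)) *
          (markovWeight q ν n (zeroExtend u) : ℂ)‖ := by
        simp_rw [Complex.real_smul, mul_comm]
    _ ≤ (1 - δ ^ (N + 1)) ^ #T := by
        simpa [htotal] using norm_sum_prod_addChar_mul_markovWeight_le hν hδ hδq hq1 T hTwin
          hsep fun j hj => (mem_filter.1 (hT hj)).2
    _ ≤ (1 - δ ^ (N + 1)) ^ M :=
        pow_le_pow_of_le_one hθ (by linarith [pow_nonneg hδ (N + 1)]) hMT.le

end Window

/-- A stationary `N`-step Markov measure on `A^ℤ` whose transition probabilities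
`q^a_b` (`a ∈ A^N`, `b ∈ A`) are all strictly positive is harmonically mixing. -/
theorem nstep_markov_harmonically_mixing (A : Type*) [AddCommGroup A]
    [Fintype A] [MeasurableSpace A] (N : ℕ)
    (q : (Fin N → A) → A → ℝ) (hqpos : ∀ a b, 0 < q a b)
    (hqrow : ∀ a, ∑ b, q a b = 1)
    (ν : (Fin N → A) → ℝ) (hν0 : ∀ a, 0 ≤ ν a) (hν1 : ∑ a, ν a = 1)
    (α : Measure (ℤ → A)) [IsProbabilityMeasure α]
    (hα : ∀ (k : ℤ) (n : ℕ) (f : ℕ → A),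
      α {x | ∀ i : ℕ, i < N + n → x (k + i) = f i}
        = ENNReal.ofReal (ν (fun j : Fin N => f j) *
            ∏ i ∈ Finset.range n, q (fun j : Fin N => f (i + j)) (f (i + N)))) :
    HarmonicallyMixing α := by
  have hq1 : ∀ a b, q a b ≤ 1 := fun a b =>
    (single_le_sum (fun b' _ => (hqpos a b').le) (mem_univ b)).trans_eq (hqrow a)
  -- as `A` is finite, this instance makes singletons measurable
  have := separatesPoints_of_markov hqpos hqrow hν0 hν1 α (hα (-N) 1)
  obtain ⟨ab, hδq⟩ := Finite.exists_min fun ab : (Fin N → A) × A => q ab.1 ab.2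
  have hδ : 0 < q ab.1 ab.2 := hqpos _ _
  intro ε hε
  obtain ⟨M, hM⟩ := exists_pow_lt_of_lt_one hε
    (by linarith [pow_pos hδ (N + 1)] : 1 - q ab.1 ab.2 ^ (N + 1) < 1)
  refine ⟨(N + 1) * M, fun χ hfin hcard => ?_⟩
  obtain ⟨k, n, hkn⟩ := exists_window_of_finite hfin N
  exact (norm_integral_charEval_le α (hα k n) hν0 hδ.le (fun a b => hδq (a, b)) hq1 hkn
    hcard).trans_lt hM
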